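/- arXiv:math/0611072 — 2 statements merged into one kernel-verified Lean document; each statement's English description precedes it below -/
import Mathlib

section
/- Let (γ_k)_{k≥1} be a sequence of positive reals with Γ_n := ∑_{k=1}^n γ_k. Then for every n, ∑_{k=1}^n γ_k³ Γ_k ≤ (∑_{k=1}^n γ_k²)². -/
/-! For a nonincreasing positive sequence, `γ k * Γ k = ∑_{j ≤ k} γ k * γ j ≤ ∑_{j ≤ k} γ j ^ 2 =: S k`,
so `∑_k γ k ^ 3 * Γ k ≤ ∑_k γ k ^ 2 * S k ≤ (∑_k γ k ^ 2) * S n = S n ^ 2`. -/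

open Finset

theorem Finset.mul_sum_le_sum_sq {ι R : Type*} [Semiring R] [PartialOrder R] [IsOrderedRing R]
    (s : Finset ι) (f : ι → R) (c : R) (hf : ∀ i ∈ s, 0 ≤ f i) (hc : ∀ i ∈ s, c ≤ f i) :
    c * ∑ i ∈ s, f i ≤ ∑ i ∈ s, f i ^ 2 := by
  rw [mul_sum]
  gcongr with i hi
  rw [sq]
  exact mul_le_mul_of_nonneg_right (hc i hi) (hf i hi)

theorem Finset.sum_Icc_mul_partialSum_le_sq {R : Type*} [CommSemiring R] [PartialOrder R]
    [IsOrderedRing R] (a : ℕ → R) (ha : ∀ k, 0 ≤ a k) (n : ℕ) :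
    ∑ k ∈ Icc 1 n, a k * ∑ j ∈ Icc 1 k, a j ≤ (∑ k ∈ Icc 1 n, a k) ^ 2 := by
  calc ∑ k ∈ Icc 1 n, a k * ∑ j ∈ Icc 1 k, a j
      ≤ ∑ k ∈ Icc 1 n, a k * ∑ j ∈ Icc 1 n, a j := by
        gcongr with k hk
        · exact ha k
        · exact fun j _ _ ↦ ha j
        · exact (mem_Icc.1 hk).2
    _ = (∑ k ∈ Icc 1 n, a k) ^ 2 := by rw [← sum_mul, sq]

theorem sum_cube_mul_partial_le_sq_sum_sq
    (γ : ℕ → ℝ) (hpos : ∀ k, 0 < γ k)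
    (hmono : ∀ j k, 1 ≤ j → j ≤ k → γ k ≤ γ j)
    (Γ : ℕ → ℝ) (hΓ : ∀ n, Γ n = ∑ k ∈ Finset.Icc 1 n, γ k) :
    ∀ n, ∑ k ∈ Finset.Icc 1 n, (γ k) ^ 3 * Γ k ≤ (∑ k ∈ Finset.Icc 1 n, (γ k) ^ 2) ^ 2 := by
  intro n
  have hγΓ : ∀ k, γ k * Γ k ≤ ∑ j ∈ Icc 1 k, γ j ^ 2 := fun k ↦ by
    rw [hΓ]
    exact mul_sum_le_sum_sq _ γ _ (fun j _ ↦ (hpos j).le)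
      fun j hj ↦ hmono j k (mem_Icc.1 hj).1 (mem_Icc.1 hj).2
  calc ∑ k ∈ Icc 1 n, γ k ^ 3 * Γ k = ∑ k ∈ Icc 1 n, γ k ^ 2 * (γ k * Γ k) := by
        congr! 1 with k; ring
    _ ≤ ∑ k ∈ Icc 1 n, γ k ^ 2 * ∑ j ∈ Icc 1 k, γ j ^ 2 := by gcongr with k; exact hγΓ k
    _ ≤ (∑ k ∈ Icc 1 n, γ k ^ 2) ^ 2 := sum_Icc_mul_partialSum_le_sq _ (fun k ↦ sq_nonneg _) n
end

section
/- With A and A^{k,W}f(x) = A^{k,P}f(x) + (1/2)∫_{|y|≤u_k} D²f(x)(κ(x)y)^{⊗2}π(dy), if f ∈ C³ with ‖D³f‖_∞ < ∞, then |Af(x) - A^{k,W}f(x)| ≤ (d^{3/2}/6)‖D³f‖_∞ ‖κ(x)‖³ ∫_{|y|≤u_k}|y|³π(dy). -/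
open MeasureTheory
open scoped RealInnerProductSpace

open Set in
lemma taylor3_aux {E : Type*} [NormedAddCommGroup E] [NormedSpace ℝ E]
    (f : E → ℝ) (hf : ContDiff ℝ 3 f) (C : ℝ) (hC : ∀ z, ‖iteratedFDeriv ℝ 3 f z‖ ≤ C)
    (x h : E) :
    |f (x + h) - f x - fderiv ℝ f x h - (1 / 2) * iteratedFDeriv ℝ 2 f x ![h, h]| ≤
      C / 6 * ‖h‖ ^ 3 := by
  set c : ℝ → E := fun t => x + t • h with hc_def
  have hc : ∀ t : ℝ, HasDerivAt c h t := by
    intro t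
    have := ((hasDerivAt_id t).smul_const h).const_add x
    rw [one_smul] at this
    exact this
  have hd1 : Differentiable ℝ f := hf.differentiable (by norm_num)
  have hf1 : ContDiff ℝ 2 (fderiv ℝ f) := hf.fderiv_right (by norm_num)
  have hd2 : Differentiable ℝ (fderiv ℝ f) := hf1.differentiable (by norm_num)
  have hf2 : ContDiff ℝ 1 (fderiv ℝ (fderiv ℝ f)) := hf1.fderiv_right (by norm_num)
  have hd3 : Differentiable ℝ (fderiv ℝ (fderiv ℝ f)) := hf2.differentiable (by norm_num)
  set g : ℝ → ℝ := fun t => f (c t) with hg_def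
  set g1 : ℝ → ℝ := fun t => fderiv ℝ f (c t) h with hg1_def
  set g2 : ℝ → ℝ := fun t => fderiv ℝ (fderiv ℝ f) (c t) h h with hg2_def
  set g3 : ℝ → ℝ := fun t => fderiv ℝ (fderiv ℝ (fderiv ℝ f)) (c t) h h h with hg3_def
  have hg : ∀ t : ℝ, HasDerivAt g (g1 t) t := fun t =>
    (hd1 (c t)).hasFDerivAt.comp_hasDerivAt t (hc t)
  have hD1 : ∀ t : ℝ, HasDerivAt (fun s => fderiv ℝ f (c s)) (fderiv ℝ (fderiv ℝ f) (c t) h) t :=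
    fun t => (hd2 (c t)).hasFDerivAt.comp_hasDerivAt t (hc t)
  have hg1 : ∀ t : ℝ, HasDerivAt g1 (g2 t) t := by
    intro t
    simpa using (hD1 t).clm_apply (hasDerivAt_const t h)
  have hD2 : ∀ t : ℝ, HasDerivAt (fun s => fderiv ℝ (fderiv ℝ f) (c s))
      (fderiv ℝ (fderiv ℝ (fderiv ℝ f)) (c t) h) t :=
    fun t => by
      have := HasFDerivAt.comp_hasDerivAt (l := fderiv ℝ (fderiv ℝ f)) t (hd3 (c t)).hasFDerivAt (hc t)
      exact this
  have hg2 : ∀ t : ℝ, HasDerivAt g2 (g3 t) t := by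
    intro t
    have h1 := (hD2 t).clm_apply (hasDerivAt_const t h)
    have h2 := h1.clm_apply (hasDerivAt_const t h)
    simpa using h2
  have hCnn : 0 ≤ C := le_trans (norm_nonneg _) (hC x)
  set K : ℝ := C * ‖h‖ ^ 3 with hK_def
  have hKnn : 0 ≤ K := by positivity
  have hg3b : ∀ t : ℝ, |g3 t| ≤ K := by
    intro t
    have heq : g3 t = iteratedFDeriv ℝ 3 f (c t) ![h, h, h] := by
      have h32 : (iteratedFDeriv ℝ (2 + 1) f (c t)) ![h, h, h] = g3 t := by
        rw [iteratedFDeriv_succ_apply_right, iteratedFDeriv_two_apply]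
        simp [Fin.init, Fin.last]
        rfl
      exact h32.symm
    rw [heq, ← Real.norm_eq_abs]
    calc ‖iteratedFDeriv ℝ 3 f (c t) ![h, h, h]‖
        ≤ ‖iteratedFDeriv ℝ 3 f (c t)‖ * ∏ i : Fin 3, ‖![h, h, h] i‖ :=
          (iteratedFDeriv ℝ 3 f (c t)).le_opNorm _
      _ ≤ C * ‖h‖ ^ 3 := by
          rw [Fin.prod_univ_three]
          simp only [Matrix.cons_val_zero, Matrix.cons_val_one, Matrix.head_cons]
          calc ‖iteratedFDeriv ℝ 3 f (c t)‖ * (‖h‖ * ‖h‖ * ‖h‖)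
              ≤ C * (‖h‖ * ‖h‖ * ‖h‖) := by
                apply mul_le_mul_of_nonneg_right (hC _); positivity
            _ = C * ‖h‖ ^ 3 := by ring
  -- Step 1: |g2 t - g2 0| ≤ K * t on [0,1]
  have step1 : ∀ t ∈ Icc (0 : ℝ) 1, ‖g2 t - g2 0‖ ≤ K * (t - 0) := by
    apply norm_image_sub_le_of_norm_deriv_le_segment' (f' := g3)
    · exact fun t _ => (hg2 t).hasDerivWithinAt
    · intro t _; rw [Real.norm_eq_abs]; exact hg3b t
  -- Step 2
  have step2 : ∀ t ∈ Icc (0 : ℝ) 1, ‖g1 t - g1 0 - t * g2 0‖ ≤ K * t ^ 2 / 2 := by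
    have := image_norm_le_of_norm_deriv_right_le_deriv_boundary
      (f := fun t => g1 t - g1 0 - t * g2 0) (f' := fun t => g2 t - g2 0)
      (a := 0) (b := 1) (B := fun t => K * t ^ 2 / 2) (B' := fun t => K * t)
      (fun t _ => (((hg1 t).sub_const (g1 0)).sub (hasDerivAt_mul_const (g2 0))).continuousAt.continuousWithinAt)
      (fun t _ => ((((hg1 t).sub_const (g1 0)).sub (hasDerivAt_mul_const (g2 0))).hasDerivWithinAt))
      (by simp)
      (fun t => by
        have := ((hasDerivAt_pow 2 t).const_mul K).div_const 2
        refine this.congr_deriv ?_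
        push_cast; ring)
      (fun t ht => by
        have := step1 t (Ico_subset_Icc_self ht)
        simpa using this)
    exact this
  -- Step 3
  have step3 : ∀ t ∈ Icc (0 : ℝ) 1,
      ‖g t - g 0 - t * g1 0 - t ^ 2 / 2 * g2 0‖ ≤ K * t ^ 3 / 6 := by
    have := image_norm_le_of_norm_deriv_right_le_deriv_boundary
      (f := fun t => g t - g 0 - t * g1 0 - t ^ 2 / 2 * g2 0)
      (f' := fun t => g1 t - g1 0 - t * g2 0)
      (a := 0) (b := 1) (B := fun t => K * t ^ 3 / 6) (B' := fun t => K * t ^ 2 / 2)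
      (fun t _ => ((((hg t).sub_const (g 0)).sub (hasDerivAt_mul_const (g1 0))).sub
        (((hasDerivAt_pow 2 t).div_const 2).mul_const (g2 0))).continuousAt.continuousWithinAt)
      (fun t _ => by
        have h1 := (((hg t).sub_const (g 0)).sub (hasDerivAt_mul_const (g1 0))).sub
          (((hasDerivAt_pow 2 t).div_const 2).mul_const (g2 0))
        have h2 : HasDerivAt (fun t => g t - g 0 - t * g1 0 - t ^ 2 / 2 * g2 0)
            (g1 t - g1 0 - t * g2 0) t := by
          refine h1.congr_deriv ?_
          push_cast; ring
        exact h2.hasDerivWithinAt)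
      (by simp)
      (fun t => by
        have := ((hasDerivAt_pow 3 t).const_mul K).div_const 6
        refine this.congr_deriv ?_
        push_cast; ring)
      (fun t ht => step2 t (Ico_subset_Icc_self ht))
    exact this
  have final := step3 1 (by norm_num)
  have hg1v : g 1 = f (x + h) := by simp [hg_def, hc_def]
  have hg0v : g 0 = f x := by simp [hg_def, hc_def]
  have hg10 : g1 0 = fderiv ℝ f x h := by simp [hg1_def, hc_def]
  have hg20 : g2 0 = iteratedFDeriv ℝ 2 f x ![h, h] := by
    rw [iteratedFDeriv_two_apply]
    simp [hg2_def, hc_def]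
  rw [hg1v, hg0v, hg10, hg20] at final
  rw [Real.norm_eq_abs] at final
  calc |f (x + h) - f x - fderiv ℝ f x h - 1 / 2 * iteratedFDeriv ℝ 2 f x ![h, h]|
      = |f (x + h) - f x - 1 * fderiv ℝ f x h - 1 ^ 2 / 2 * iteratedFDeriv ℝ 2 f x ![h, h]| := by
        norm_num
    _ ≤ K * 1 ^ 3 / 6 := final
    _ = C / 6 * ‖h‖ ^ 3 := by rw [hK_def]; ring


/-- Wienerization error bound for the generator of the scheme (W):
`|Af(x) - A^{k,W}f(x)| ≤ (d^{3/2}/6)‖D³f‖_∞ ‖κ(x)‖³ ∫_{|y|≤u_k} |y|³ π(dy)`, where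
`A^{k,W}f - A^{k,P}f = (1/2)∫_{|y|≤u_k} D²f(x)(κ(x)y)^{⊗2}π(dy)`. -/
theorem generator_wienerization_error_bound_third_order
    (d l : ℕ) (hd : 1 ≤ d)
    (κ : EuclideanSpace ℝ (Fin d) → EuclideanSpace ℝ (Fin l) →L[ℝ] EuclideanSpace ℝ (Fin d))
    (f : EuclideanSpace ℝ (Fin d) → ℝ) (hf : ContDiff ℝ 3 f)
    (C : ℝ) (hC : ∀ z, ‖iteratedFDeriv ℝ 3 f z‖ ≤ C)
    (π : Measure (EuclideanSpace ℝ (Fin l)))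
    (u : ℝ) (hu : 0 < u)
    (hcube : IntegrableOn (fun y => ‖y‖ ^ 3) {y | ‖y‖ ≤ u} π)
    (Af AkW : EuclideanSpace ℝ (Fin d) → ℝ)
    (hdiff : ∀ x, Af x - AkW x =
      ∫ y in {y | ‖y‖ ≤ u},
        (f (x + κ x y) - f x - ⟪gradient f x, κ x y⟫
          - (1 / 2) * (iteratedFDeriv ℝ 2 f x) ![κ x y, κ x y]) ∂π) :
    ∀ x, |Af x - AkW x| ≤
      ((d : ℝ) ^ ((3 : ℝ) / 2) / 6) * C * ‖κ x‖ ^ 3 *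
        ∫ y in {y | ‖y‖ ≤ u}, ‖y‖ ^ 3 ∂π := by
  intro x
  have hCnn : 0 ≤ C := le_trans (norm_nonneg _) (hC x)
  have hgrad : ∀ v, ⟪gradient f x, v⟫ = fderiv ℝ f x v := by
    intro v
    rw [gradient, ← InnerProductSpace.toDual_apply_apply, LinearIsometryEquiv.apply_symm_apply]
  have hInn : 0 ≤ ∫ y in {y | ‖y‖ ≤ u}, ‖y‖ ^ 3 ∂π :=
    integral_nonneg fun y => by positivity
  have hptwise : ∀ y : EuclideanSpace ℝ (Fin l),
      ‖f (x + κ x y) - f x - ⟪gradient f x, κ x y⟫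
        - (1 / 2) * (iteratedFDeriv ℝ 2 f x) ![κ x y, κ x y]‖ ≤
      (C / 6 * ‖κ x‖ ^ 3) * ‖y‖ ^ 3 := by
    intro y
    rw [Real.norm_eq_abs, hgrad]
    calc |f (x + κ x y) - f x - fderiv ℝ f x (κ x y)
          - 1 / 2 * (iteratedFDeriv ℝ 2 f x) ![κ x y, κ x y]|
        ≤ C / 6 * ‖κ x y‖ ^ 3 := taylor3_aux f hf C hC x (κ x y)
      _ ≤ C / 6 * (‖κ x‖ * ‖y‖) ^ 3 := by
          gcongr
          exact (κ x).le_opNorm y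
      _ = (C / 6 * ‖κ x‖ ^ 3) * ‖y‖ ^ 3 := by ring
  have hbound : |Af x - AkW x| ≤
      ∫ y in {y | ‖y‖ ≤ u}, (C / 6 * ‖κ x‖ ^ 3) * ‖y‖ ^ 3 ∂π := by
    rw [hdiff x, ← Real.norm_eq_abs]
    exact norm_integral_le_of_norm_le (hcube.const_mul _)
      (Filter.Eventually.of_forall fun y => hptwise y)
  rw [integral_const_mul] at hbound
  refine hbound.trans ?_
  have hd32 : (1 : ℝ) ≤ (d : ℝ) ^ ((3 : ℝ) / 2) :=
    Real.one_le_rpow (by exact_mod_cast hd) (by norm_num)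
  have hκ : (0 : ℝ) ≤ ‖κ x‖ ^ 3 := by positivity
  nlinarith [mul_nonneg (mul_nonneg hCnn hκ) hInn,
    mul_le_mul_of_nonneg_right (mul_le_mul_of_nonneg_right
      (mul_le_mul_of_nonneg_right hd32 (by linarith : (0:ℝ) ≤ C/6)) hκ) hInn]
end
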